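/- Define u(r) = r + h(r)/h'(r) where h(r) = r + B·r^{p+1} with B > 0 and 0 < p < 7. Then u'(r) > 0 for all r > 0. -/

import Mathlib

/-!
For any `h` with `h' ≠ 0` one has `u' = 2 - h h'' / h'^2`. Writing `t = B r^p > 0`, here
`h h'' = p (p + 1) t (1 + t)` and `h' = 1 + (p + 1) t`, so `u' > 0` amounts to the quadratic
`2 + (p + 1)(4 - p) t + (p + 1)(p + 2) t^2` being positive for `t ≥ 0`. Its discriminant is
`(p + 1) p^2 (p - 7)`, negative exactly when `p < 7`.
-/

open Real

theorem hasDerivAt_id_add_div_deriv {h h' : ℝ → ℝ} {h'' x : ℝ} (hh : HasDerivAt h (h' x) x)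
    (hh' : HasDerivAt h' h'' x) (hx : h' x ≠ 0) :
    HasDerivAt (fun y => y + h y / h' y) (2 - h x * h'' / h' x ^ 2) x :=
  ((hasDerivAt_id' x).add (hh.div hh' hx)).congr_deriv (by field_simp; ring)

theorem hasDerivAt_add_mul_rpow_add_one (B : ℝ) {p r : ℝ} (hr : 0 < r) :
    HasDerivAt (fun x => x + B * x ^ (p + 1)) (1 + B * (p + 1) * r ^ p) r :=
  ((hasDerivAt_id' r).add
    ((hasDerivAt_rpow_const (p := p + 1) (Or.inl hr.ne')).const_mul B)).congr_deriv
    (by rw [add_sub_cancel_right]; ring)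

theorem hasDerivAt_one_add_mul_rpow (c : ℝ) {p r : ℝ} (hr : 0 < r) :
    HasDerivAt (fun x => 1 + c * x ^ p) (c * p * r ^ (p - 1)) r := by
  simpa [mul_assoc] using
    ((hasDerivAt_rpow_const (p := p) (Or.inl hr.ne')).const_mul c).const_add 1

theorem two_sub_mul_div_sq_pos {p t : ℝ} (hp : -1 < p) (hp7 : p < 7) (ht : 0 ≤ t) :
    0 < 2 - p * (p + 1) * t * (1 + t) / (1 + (p + 1) * t) ^ 2 := by
  have hp1 : 0 < p + 1 := by linarith
  rw [sub_pos, div_lt_iff₀ (by positivity)]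
  rcases le_or_gt p 4 with hp4 | hp4
  · nlinarith [mul_nonneg (mul_nonneg hp1.le (sub_nonneg.2 hp4)) ht,
      mul_nonneg (mul_nonneg hp1.le (by linarith : (0:ℝ) ≤ p + 2)) (mul_nonneg ht ht)]
  -- `4(p+2) (2(1+(p+1)t)^2 - p(p+1)t(1+t)) = (p+1) (2(p+2)t+4-p)^2 + p^2 (7-p)`
  · nlinarith [mul_nonneg hp1.le (sq_nonneg (2 * (p + 2) * t + 4 - p)),
      mul_pos (mul_pos (by linarith : (0:ℝ) < p) (by linarith : (0:ℝ) < p)) (sub_pos.2 hp7)]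

/-- For `h(r) = r + B r^{p+1}` with `B > 0`, `0 < p < 7`, the function
`u(r) = r + h(r)/h'(r)` satisfies `u'(r) > 0` for all `r > 0`. -/
theorem example_polynomial_u_increasing (B p : ℝ) (hB : 0 < B) (hp : 0 < p) (hp7 : p < 7) :
    ∀ r : ℝ, 0 < r →
      0 < deriv (fun x : ℝ =>
        x + (x + B * x ^ (p + 1)) / (1 + B * (p + 1) * x ^ p)) r := by
  intro r hr
  have ht : 0 < B * r ^ p := mul_pos hB (rpow_pos_of_pos hr p)
  have hh' : 1 + B * (p + 1) * r ^ p ≠ 0 := by nlinarith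
  rw [(hasDerivAt_id_add_div_deriv (hasDerivAt_add_mul_rpow_add_one B hr)
    (hasDerivAt_one_add_mul_rpow (B * (p + 1)) hr) hh').deriv]
  have hhh'' : (r + B * r ^ (p + 1)) * (B * (p + 1) * p * r ^ (p - 1))
      = p * (p + 1) * (B * r ^ p) * (1 + B * r ^ p) := by
    rw [rpow_add hr, rpow_sub hr, rpow_one]
    field_simp
  rw [hhh'', show 1 + B * (p + 1) * r ^ p = 1 + (p + 1) * (B * r ^ p) by ring]
  exact two_sub_mul_div_sq_pos (by linarith) hp7 ht.le
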